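/- arXiv:2112.01666 — 2 statements merged into one kernel-verified Lean document; each statement's English description precedes it below -/
import Mathlib

section
/- Let 𝒱 ⊂ ℝ³ be the set of the N = 6 vertices of the regular octahedron: 𝒱 = {(±1,0,0), (0,±1,0), (0,0,±1)}. Then max_{v ∈ 𝒱^N̲} |⟨v⟩|₂² = 140. Consequently the minimum guesswork of the ensemble 𝒱 is (1/2)·(7 − √140/6) ≈ 2.5140. -/
open Pointwise

noncomputable section

abbrev E3 := EuclideanSpace ℝ (Fin 3)

/-- The vector `(a, b, c)` in ℝ³ with the Euclidean norm. -/
def vec3 (a b c : ℝ) : E3 := (WithLp.equiv 2 (Fin 3 → ℝ)).symm ![a, b, c]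

/-- `⟨v⟩ := Σ_{i=1}^N (2i − N + 1)·vᵢ` (here `i : Fin N` is 0-based, so the
coefficient reads `2(i+1) − N + 1 = 2i + 3 − N`). -/
def tupleAvg (N : ℕ) (v : Fin N → E3) : E3 :=
  ∑ i : Fin N, (2 * (i : ℝ) + 3 - N) • v i

/-- The set of values `|⟨v⟩|₂²` as `v` ranges over the `N`-tuples on `𝒱` without
repetition (i.e. bijective enumerations of `𝒱`). -/
def normSqSet (𝒱 : Set E3) (N : ℕ) : Set ℝ :=
  {x | ∃ v : Fin N → E3, Function.Injective v ∧ Set.range v = 𝒱 ∧ x = ‖tupleAvg N v‖ ^ 2}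

/-- The vertices of the regular octahedron. -/
def octahedron : Set E3 :=
  {vec3 1 0 0, vec3 (-1) 0 0, vec3 0 1 0, vec3 0 (-1) 0, vec3 0 0 1, vec3 0 0 (-1)}

/-! ### Auxiliary material -/

set_option maxRecDepth 10000

lemma vec3_inj {a b c d e f : ℝ} : vec3 a b c = vec3 d e f ↔ a = d ∧ b = e ∧ c = f := by
  constructor
  · intro h
    exact ⟨congrArg (fun x : E3 => x 0) h, congrArg (fun x : E3 => x 1) h,
      congrArg (fun x : E3 => x 2) h⟩
  · rintro ⟨rfl, rfl, rfl⟩; rfl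

def octTuple : Fin 6 → E3 :=
  ![vec3 1 0 0, vec3 (-1) 0 0, vec3 0 1 0, vec3 0 (-1) 0, vec3 0 0 1, vec3 0 0 (-1)]

lemma range_octTuple : Set.range octTuple = octahedron := by
  simp only [octTuple, Matrix.range_cons, Matrix.range_empty, Set.union_empty,
    Set.singleton_union, octahedron]

lemma octTuple_inj : Function.Injective octTuple := by
  intro i j h
  fin_cases i <;> fin_cases j <;>
    simp only [octTuple, Matrix.cons_val_zero, Matrix.cons_val_one, Matrix.head_cons,
      Matrix.cons_val_succ] at h <;>
    first
    | rfl
    | exact absurd (vec3_inj.mp h) (by norm_num)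

lemma exists_perm {v : Fin 6 → E3} (hv : Function.Injective v)
    (hr : Set.range v = Set.range octTuple) :
    ∃ σ : Equiv.Perm (Fin 6), v = octTuple ∘ σ := by
  let e1 : Fin 6 ≃ Set.range octTuple :=
    (Equiv.ofInjective v hv).trans (Equiv.setCongr hr)
  let e2 : Fin 6 ≃ Set.range octTuple := Equiv.ofInjective octTuple octTuple_inj
  refine ⟨e1.trans e2.symm, funext fun i => ?_⟩
  have h1 : (e1 i : E3) = v i := rfl
  have h2 : octTuple (e2.symm (e1 i)) = (e1 i : E3) := by
    have := e2.apply_symm_apply (e1 i)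
    exact congrArg Subtype.val this
  simp only [Function.comp, Equiv.trans_apply]
  rw [h2, h1]

lemma tupleAvg_apply (N : ℕ) (v : Fin N → E3) (k : Fin 3) :
    tupleAvg N v k = ∑ i : Fin N, (2 * (i : ℝ) + 3 - N) * v i k := by
  simp only [tupleAvg]
  rw [WithLp.ofLp_sum, Finset.sum_apply]
  simp [PiLp.smul_apply, smul_eq_mul]

lemma norm_sq_eq (x : E3) : ‖x‖ ^ 2 = x 0 ^ 2 + x 1 ^ 2 + x 2 ^ 2 := by
  rw [EuclideanSpace.norm_eq, Real.sq_sqrt (by positivity)]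
  rw [Fin.sum_univ_three]
  simp [Real.norm_eq_abs, sq_abs]

def fz : Fin 6 → ℤ := ![-3,-1,1,3,5,7]

lemma fz_cast (i : Fin 6) : ((fz i : ℤ) : ℝ) = 2 * (i : ℝ) + 3 - (6:ℕ) := by
  fin_cases i <;> norm_num [fz]

lemma oct0 : octTuple 0 = vec3 1 0 0 := rfl
lemma oct1 : octTuple 1 = vec3 (-1) 0 0 := rfl
lemma oct2 : octTuple 2 = vec3 0 1 0 := rfl
lemma oct3 : octTuple 3 = vec3 0 (-1) 0 := rfl
lemma oct4 : octTuple 4 = vec3 0 0 1 := rfl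
lemma oct5 : octTuple 5 = vec3 0 0 (-1) := rfl
lemma v3a (a b c : ℝ) : vec3 a b c 0 = a := rfl
lemma v3b (a b c : ℝ) : vec3 a b c 1 = b := rfl
lemma v3c (a b c : ℝ) : vec3 a b c 2 = c := rfl

lemma key (σ : Equiv.Perm (Fin 6)) :
    ‖tupleAvg 6 (octTuple ∘ σ)‖ ^ 2 =
      (((fz (σ⁻¹ 0) - fz (σ⁻¹ 1))^2 + (fz (σ⁻¹ 2) - fz (σ⁻¹ 3))^2
        + (fz (σ⁻¹ 4) - fz (σ⁻¹ 5))^2 : ℤ) : ℝ) := by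
  have hre : ∀ k : Fin 3, tupleAvg 6 (octTuple ∘ σ) k
      = ∑ j : Fin 6, (2 * ((σ⁻¹ j : Fin 6) : ℝ) + 3 - (6:ℕ)) * octTuple j k := by
    intro k
    rw [tupleAvg_apply, ← Equiv.sum_comp σ
      (fun j => (2 * ((σ⁻¹ j : Fin 6) : ℝ) + 3 - (6:ℕ)) * octTuple j k)]
    simp [Function.comp]
  rw [norm_sq_eq, hre 0, hre 1, hre 2]
  simp only [Fin.sum_univ_six, oct0, oct1, oct2, oct3, oct4, oct5, v3a, v3b, v3c,
    ← fz_cast]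
  push_cast
  ring

lemma int_bound : ∀ τ : Equiv.Perm (Fin 6),
    (fz (τ 0) - fz (τ 1))^2 + (fz (τ 2) - fz (τ 3))^2 + (fz (τ 4) - fz (τ 5))^2 ≤ 140 := by
  decide

def σ₀ : Equiv.Perm (Fin 6) :=
  ⟨![1,3,5,4,2,0], ![5,0,4,1,3,2], by decide, by decide⟩

theorem octahedron_guesswork :
    IsGreatest (normSqSet octahedron 6) 140 ∧
    |(1 / 2 : ℝ) * (6 + 1 - Real.sqrt 140 / 6) - 2.5140| < 0.0001 := by
  constructor
  · constructor
    · refine ⟨octTuple ∘ σ₀, octTuple_inj.comp σ₀.injective, ?_, ?_⟩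
      · rw [Set.range_comp, Equiv.range_eq_univ, Set.image_univ, range_octTuple]
      · rw [key σ₀]
        have h0 : σ₀⁻¹ 0 = 5 := rfl
        have h1 : σ₀⁻¹ 1 = 0 := rfl
        have h2 : σ₀⁻¹ 2 = 4 := rfl
        have h3 : σ₀⁻¹ 3 = 1 := rfl
        have h4 : σ₀⁻¹ 4 = 3 := rfl
        have h5 : σ₀⁻¹ 5 = 2 := rfl
        rw [h0, h1, h2, h3, h4, h5]
        rw [show fz 5 = 7 from rfl, show fz 0 = -3 from rfl, show fz 4 = 5 from rfl,
          show fz 1 = -1 from rfl, show fz 3 = 3 from rfl, show fz 2 = 1 from rfl]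
        norm_num
    · rintro x ⟨v, hv, hr, rfl⟩
      rw [← range_octTuple] at hr
      obtain ⟨σ, rfl⟩ := exists_perm hv hr
      rw [key σ]
      have := int_bound σ⁻¹
      exact_mod_cast this
  · have h140 : Real.sqrt 140 ^ 2 = 140 := Real.sq_sqrt (by norm_num)
    have hnn : (0:ℝ) ≤ Real.sqrt 140 := Real.sqrt_nonneg 140
    have hlo : (11.8308 : ℝ) < Real.sqrt 140 := by nlinarith
    have hhi : Real.sqrt 140 < 11.8325 := by nlinarith
    rw [abs_lt]
    constructor <;> nlinarith
end
end

section
/- Let 𝒱 ⊂ ℝ³ be the set of the N = 8 vertices of the cube: 𝒱 = {(±1,±1,±1)}. Then max_{v ∈ 𝒱^N̲} |⟨v⟩|₂² = 1344. Consequently, for the unit-normalized ensemble 𝒱/√3 one has g = 1344/3, and its minimum guesswork is (1/2)·(9 − √(1344/3)/8) ≈ 3.1771. -/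
open Pointwise

noncomputable section

/-- The vertices `(±1, ±1, ±1)` of the cube. -/
def cube : Set E3 :=
  {v | ∃ s : Fin 3 → ℝ, (∀ i, s i = 1 ∨ s i = -1) ∧
       v = (WithLp.equiv 2 (Fin 3 → ℝ)).symm s}

/-! ### Auxiliary material -/

/-- Integer sign matrix of the 8 cube vertices. -/
def sgnsZ : Fin 8 → Fin 3 → ℤ :=
  ![![1,1,1], ![-1,1,1], ![1,-1,1], ![-1,-1,1],
    ![1,1,-1], ![-1,1,-1], ![1,-1,-1], ![-1,-1,-1]]

def sgns (k : Fin 8) (j : Fin 3) : ℝ := (sgnsZ k j : ℝ)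

/-- Standard enumeration of the cube vertices. -/
def Ecube (k : Fin 8) : E3 := (WithLp.equiv 2 (Fin 3 → ℝ)).symm (sgns k)

lemma s00 : sgns 0 0 = 1 := by have h : sgnsZ 0 0 = 1 := by decide
                               simp [sgns, h]
lemma s01 : sgns 0 1 = 1 := by have h : sgnsZ 0 1 = 1 := by decide
                               simp [sgns, h]
lemma s02 : sgns 0 2 = 1 := by have h : sgnsZ 0 2 = 1 := by decide
                               simp [sgns, h]
lemma s10 : sgns 1 0 = -1 := by have h : sgnsZ 1 0 = -1 := by decide
                                simp [sgns, h]
lemma s11 : sgns 1 1 = 1 := by have h : sgnsZ 1 1 = 1 := by decide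
                               simp [sgns, h]
lemma s12 : sgns 1 2 = 1 := by have h : sgnsZ 1 2 = 1 := by decide
                               simp [sgns, h]
lemma s20 : sgns 2 0 = 1 := by have h : sgnsZ 2 0 = 1 := by decide
                               simp [sgns, h]
lemma s21 : sgns 2 1 = -1 := by have h : sgnsZ 2 1 = -1 := by decide
                                simp [sgns, h]
lemma s22 : sgns 2 2 = 1 := by have h : sgnsZ 2 2 = 1 := by decide
                               simp [sgns, h]
lemma s30 : sgns 3 0 = -1 := by have h : sgnsZ 3 0 = -1 := by decide
                                simp [sgns, h]
lemma s31 : sgns 3 1 = -1 := by have h : sgnsZ 3 1 = -1 := by decide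
                                simp [sgns, h]
lemma s32 : sgns 3 2 = 1 := by have h : sgnsZ 3 2 = 1 := by decide
                               simp [sgns, h]
lemma s40 : sgns 4 0 = 1 := by have h : sgnsZ 4 0 = 1 := by decide
                               simp [sgns, h]
lemma s41 : sgns 4 1 = 1 := by have h : sgnsZ 4 1 = 1 := by decide
                               simp [sgns, h]
lemma s42 : sgns 4 2 = -1 := by have h : sgnsZ 4 2 = -1 := by decide
                                simp [sgns, h]
lemma s50 : sgns 5 0 = -1 := by have h : sgnsZ 5 0 = -1 := by decide
                                simp [sgns, h]
lemma s51 : sgns 5 1 = 1 := by have h : sgnsZ 5 1 = 1 := by decide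
                               simp [sgns, h]
lemma s52 : sgns 5 2 = -1 := by have h : sgnsZ 5 2 = -1 := by decide
                                simp [sgns, h]
lemma s60 : sgns 6 0 = 1 := by have h : sgnsZ 6 0 = 1 := by decide
                               simp [sgns, h]
lemma s61 : sgns 6 1 = -1 := by have h : sgnsZ 6 1 = -1 := by decide
                                simp [sgns, h]
lemma s62 : sgns 6 2 = -1 := by have h : sgnsZ 6 2 = -1 := by decide
                                simp [sgns, h]
lemma s70 : sgns 7 0 = -1 := by have h : sgnsZ 7 0 = -1 := by decide
                                simp [sgns, h]
lemma s71 : sgns 7 1 = -1 := by have h : sgnsZ 7 1 = -1 := by decide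
                                simp [sgns, h]
lemma s72 : sgns 7 2 = -1 := by have h : sgnsZ 7 2 = -1 := by decide
                                simp [sgns, h]

lemma Ecube_inj : Function.Injective Ecube := by
  intro k l h
  have h' : sgns k = sgns l := (WithLp.equiv 2 (Fin 3 → ℝ)).symm.injective h
  have : sgnsZ k = sgnsZ l := by
    funext j
    have hj := congrFun h' j
    simp only [sgns] at hj
    exact_mod_cast hj
  have hinj : Function.Injective sgnsZ := by decide
  exact hinj this

lemma sgns_pm : ∀ k j, sgns k j = 1 ∨ sgns k j = -1 := by
  have h : ∀ k j, sgnsZ k j = 1 ∨ sgnsZ k j = -1 := by decide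
  intro k j
  rcases h k j with h' | h' <;> [left; right] <;> simp [sgns, h']

lemma range_Ecube : Set.range Ecube = cube := by
  ext x
  constructor
  · rintro ⟨k, rfl⟩
    exact ⟨sgns k, sgns_pm k, rfl⟩
  · rintro ⟨s, hs, rfl⟩
    rcases hs 0 with h0 | h0 <;> rcases hs 1 with h1 | h1 <;> rcases hs 2 with h2 | h2
    · exact ⟨0, congrArg (WithLp.equiv 2 (Fin 3 → ℝ)).symm (funext fun j => by fin_cases j <;> [exact s00.trans h0.symm; exact s01.trans h1.symm; exact s02.trans h2.symm] : sgns 0 = s)⟩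
    · exact ⟨4, congrArg (WithLp.equiv 2 (Fin 3 → ℝ)).symm (funext fun j => by fin_cases j <;> [exact s40.trans h0.symm; exact s41.trans h1.symm; exact s42.trans h2.symm] : sgns 4 = s)⟩
    · exact ⟨2, congrArg (WithLp.equiv 2 (Fin 3 → ℝ)).symm (funext fun j => by fin_cases j <;> [exact s20.trans h0.symm; exact s21.trans h1.symm; exact s22.trans h2.symm] : sgns 2 = s)⟩
    · exact ⟨6, congrArg (WithLp.equiv 2 (Fin 3 → ℝ)).symm (funext fun j => by fin_cases j <;> [exact s60.trans h0.symm; exact s61.trans h1.symm; exact s62.trans h2.symm] : sgns 6 = s)⟩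
    · exact ⟨1, congrArg (WithLp.equiv 2 (Fin 3 → ℝ)).symm (funext fun j => by fin_cases j <;> [exact s10.trans h0.symm; exact s11.trans h1.symm; exact s12.trans h2.symm] : sgns 1 = s)⟩
    · exact ⟨5, congrArg (WithLp.equiv 2 (Fin 3 → ℝ)).symm (funext fun j => by fin_cases j <;> [exact s50.trans h0.symm; exact s51.trans h1.symm; exact s52.trans h2.symm] : sgns 5 = s)⟩
    · exact ⟨3, congrArg (WithLp.equiv 2 (Fin 3 → ℝ)).symm (funext fun j => by fin_cases j <;> [exact s30.trans h0.symm; exact s31.trans h1.symm; exact s32.trans h2.symm] : sgns 3 = s)⟩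
    · exact ⟨7, congrArg (WithLp.equiv 2 (Fin 3 → ℝ)).symm (funext fun j => by fin_cases j <;> [exact s70.trans h0.symm; exact s71.trans h1.symm; exact s72.trans h2.symm] : sgns 7 = s)⟩

lemma piLp_sum_apply (f : Fin 8 → E3) (j : Fin 3) :
    (∑ i : Fin 8, f i) j = ∑ i : Fin 8, f i j := by
  induction (Finset.univ : Finset (Fin 8)) using Finset.induction with
  | empty => rfl
  | insert _ _ h ih => rw [Finset.sum_insert h, Finset.sum_insert h, PiLp.add_apply, ih]

set_option maxHeartbeats 1000000 in
lemma normsq_eq (v : Fin 8 → E3) :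
    ‖tupleAvg 8 v‖ ^ 2 = ∑ j : Fin 3, (∑ i : Fin 8, (2*(i:ℝ)+3-8) * v i j) ^ 2 := by
  rw [EuclideanSpace.norm_eq, Real.sq_sqrt (by positivity)]
  congr 1; funext j
  rw [tupleAvg, piLp_sum_apply]
  simp [PiLp.smul_apply, smul_eq_mul, Real.norm_eq_abs, sq_abs]

set_option maxHeartbeats 1000000 in
/-- Parseval-type inequality on the cube. -/
lemma key_ineq (a : Fin 8 → ℝ) :
    ∑ j : Fin 3, (∑ k : Fin 8, a k * sgns k j) ^ 2
      ≤ 8 * (∑ k : Fin 8, a k ^ 2) - (∑ k : Fin 8, a k) ^ 2 := by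
  simp only [Fin.sum_univ_three, Fin.sum_univ_eight,
    s00, s01, s02, s10, s11, s12, s20, s21, s22, s30, s31, s32,
    s40, s41, s42, s50, s51, s52, s60, s61, s62, s70, s71, s72,
    mul_one, mul_neg_one]
  nlinarith [sq_nonneg (a 0 - a 1 - a 2 + a 3 + a 4 - a 5 - a 6 + a 7),
    sq_nonneg (a 0 - a 1 + a 2 - a 3 - a 4 + a 5 - a 6 + a 7),
    sq_nonneg (a 0 + a 1 - a 2 - a 3 - a 4 - a 5 + a 6 + a 7),
    sq_nonneg (a 0 - a 1 - a 2 + a 3 - a 4 + a 5 + a 6 - a 7)]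

lemma cube_ub : ∀ x ∈ normSqSet cube 8, x ≤ 1344 := by
  rintro x ⟨v, hinj, hrange, rfl⟩
  have hmem : ∀ i, v i ∈ Set.range Ecube := by
    intro i; rw [range_Ecube, ← hrange]; exact ⟨i, rfl⟩
  choose π hπ using hmem
  have hπinj : Function.Injective π := by
    intro i i' h
    apply hinj
    rw [← hπ i, ← hπ i', h]
  have hπbij : Function.Bijective π := Finite.injective_iff_bijective.mp hπinj
  let σ : Fin 8 ≃ Fin 8 := Equiv.ofBijective π hπbij
  set c : Fin 8 → ℝ := fun i => 2*(i:ℝ)+3-8 with hc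
  have hval : ‖tupleAvg 8 v‖ ^ 2
      = ∑ j : Fin 3, (∑ k : Fin 8, c (σ.symm k) * sgns k j) ^ 2 := by
    rw [normsq_eq]
    congr 1; funext j
    congr 1
    rw [← Equiv.sum_comp σ (fun k => c (σ.symm k) * sgns k j)]
    congr 1; funext i
    have h1 : σ.symm (σ i) = i := Equiv.symm_apply_apply σ i
    have h2 : v i = Ecube (σ i) := (hπ i).symm
    rw [h1, h2]
    rfl
  rw [hval]
  have h1 : (∑ k : Fin 8, c (σ.symm k) ^ 2) = 200 := by
    rw [Equiv.sum_comp σ.symm (fun i => c i ^ 2)]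
    rw [hc]
    rw [Fin.sum_univ_eight]
    norm_num [show ((2:Fin 8):ℕ) = 2 from rfl, show ((3:Fin 8):ℕ) = 3 from rfl, show ((4:Fin 8):ℕ) = 4 from rfl, show ((5:Fin 8):ℕ) = 5 from rfl, show ((6:Fin 8):ℕ) = 6 from rfl, show ((7:Fin 8):ℕ) = 7 from rfl]
  have h2 : (∑ k : Fin 8, c (σ.symm k)) = 16 := by
    rw [Equiv.sum_comp σ.symm c, hc, Fin.sum_univ_eight]
    norm_num [show ((2:Fin 8):ℕ) = 2 from rfl, show ((3:Fin 8):ℕ) = 3 from rfl, show ((4:Fin 8):ℕ) = 4 from rfl, show ((5:Fin 8):ℕ) = 5 from rfl, show ((6:Fin 8):ℕ) = 6 from rfl, show ((7:Fin 8):ℕ) = 7 from rfl]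
  have h3 := key_ineq (fun k => c (σ.symm k))
  rw [h1, h2] at h3
  linarith

set_option maxHeartbeats 1000000 in
lemma Ecube_val : ‖tupleAvg 8 Ecube‖ ^ 2 = 1344 := by
  rw [normsq_eq]
  have h : ∀ i j, Ecube i j = sgns i j := fun i j => rfl
  simp only [h, Fin.sum_univ_three, Fin.sum_univ_eight,
    s00, s01, s02, s10, s11, s12, s20, s21, s22, s30, s31, s32,
    s40, s41, s42, s50, s51, s52, s60, s61, s62, s70, s71, s72,
    mul_one, mul_neg_one]
  norm_num [show ((2:Fin 8):ℕ) = 2 from rfl, show ((3:Fin 8):ℕ) = 3 from rfl, show ((4:Fin 8):ℕ) = 4 from rfl, show ((5:Fin 8):ℕ) = 5 from rfl, show ((6:Fin 8):ℕ) = 6 from rfl, show ((7:Fin 8):ℕ) = 7 from rfl]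

lemma cube_isGreatest : IsGreatest (normSqSet cube 8) 1344 :=
  ⟨⟨Ecube, Ecube_inj, range_Ecube, Ecube_val.symm⟩, cube_ub⟩

lemma tupleAvg_smul (r : ℝ) (v : Fin 8 → E3) :
    tupleAvg 8 (fun i => r • v i) = r • tupleAvg 8 v := by
  rw [tupleAvg, tupleAvg, Finset.smul_sum]
  congr 1; funext i
  rw [smul_comm]

lemma mem_smul_normSqSet {r : ℝ} (hr : r ≠ 0) (V : Set E3) (x : ℝ) :
    x ∈ normSqSet (r • V) 8 ↔ ∃ y ∈ normSqSet V 8, x = r ^ 2 * y := by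
  have hnorm : ∀ (w : Fin 8 → E3), ‖tupleAvg 8 (fun i => r • w i)‖ ^ 2
      = r ^ 2 * ‖tupleAvg 8 w‖ ^ 2 := by
    intro w
    rw [tupleAvg_smul, norm_smul, mul_pow, Real.norm_eq_abs, sq_abs]
  constructor
  · rintro ⟨v, hinj, hrange, rfl⟩
    refine ⟨‖tupleAvg 8 (fun i => r⁻¹ • v i)‖ ^ 2,
      ⟨fun i => r⁻¹ • v i, fun i i' h => hinj (by
        have h2 := congrArg (fun z => r • z) h
        simpa [smul_smul, mul_inv_cancel₀ hr] using h2), ?_, rfl⟩, ?_⟩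
    · have h3 : Set.range (fun i => r⁻¹ • v i) = r⁻¹ • Set.range v := by
        rw [← Set.smul_set_range]
      rw [h3, hrange, smul_smul, inv_mul_cancel₀ hr, one_smul]
    · have h4 := hnorm (fun i => r⁻¹ • v i)
      have hvv : (fun i => r • r⁻¹ • v i) = v := by
        funext i; rw [smul_smul, mul_inv_cancel₀ hr, one_smul]
      rw [hvv] at h4
      exact h4
  · rintro ⟨y, ⟨w, hinj, hrange, rfl⟩, rfl⟩
    refine ⟨fun i => r • w i, fun i i' h => hinj (smul_right_injective E3 hr h), ?_,
      (hnorm w).symm⟩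
    rw [← Set.smul_set_range, hrange]

theorem cube_guesswork :
    IsGreatest (normSqSet cube 8) 1344 ∧
    IsGreatest (normSqSet ((Real.sqrt 3)⁻¹ • cube) 8) (1344 / 3) ∧
    |(1 / 2 : ℝ) * (8 + 1 - Real.sqrt (1344 / 3) / 8) - 3.1771| < 0.0001 := by
  have hs3 : Real.sqrt 3 ≠ 0 := by positivity
  have hr2 : ((Real.sqrt 3)⁻¹ : ℝ) ^ 2 = 1 / 3 := by
    rw [inv_pow, Real.sq_sqrt (by norm_num : (0:ℝ) ≤ 3)]
    norm_num
  refine ⟨cube_isGreatest, ⟨?_, ?_⟩, ?_⟩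
  · rw [mem_smul_normSqSet (inv_ne_zero hs3) cube]
    exact ⟨1344, cube_isGreatest.1, by rw [hr2]; norm_num⟩
  · intro x hx
    rw [mem_smul_normSqSet (inv_ne_zero hs3) cube] at hx
    obtain ⟨y, hy, rfl⟩ := hx
    have hyle := cube_isGreatest.2 hy
    rw [hr2]
    linarith
  · have h0 : Real.sqrt (1344/3) ^ 2 = 1344/3 := Real.sq_sqrt (by norm_num)
    have hn : (0:ℝ) ≤ Real.sqrt (1344/3) := Real.sqrt_nonneg _
    rw [abs_lt]
    constructor <;> nlinarith [h0, hn]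
end
end
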